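/- arXiv:2502.11257 — 3 statements merged into one kernel-verified Lean document; each statement's English description precedes it below -/
import Mathlib

section
/- (Birman–Schwinger principle, eigenvalue correspondence.) For every λ with λ ∉ σ(A) and every t > 0, the dimension of ker(A − tV − λI) equals the dimension of ker(X(λ) − t^{-1}·I); in particular, λ is an eigenvalue of A − tV if and only if 1/t is an eigenvalue of X(λ), with equal multiplicities. -/
/-!
The Birman–Schwinger principle is pure algebra. If `B = A - λ` is invertible and `V = S T`
(here `S = T = √V`), then `(B - t S T) u = 0` means `u = t B⁻¹ S T u`, so `φ = T u` solves
`T B⁻¹ S φ = t⁻¹ φ`; conversely `φ ↦ t B⁻¹ S φ` maps solutions back, and the two maps are mutually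
inverse linear maps between the two kernels.
-/

open Filter

noncomputable section

namespace ContinuousLinearMap

section Inverse

variable {R E : Type*} [Semiring R] [TopologicalSpace E] [AddCommMonoid E] [Module R E]
  {B : E →L[R] E}

theorem apply_inverse_apply (hB : IsUnit B) (y : E) : B (Ring.inverse B y) = y := by
  rw [← mul_apply_eq_comp, Ring.mul_inverse_cancel B hB, one_apply_eq_self]

theorem inverse_apply_apply (hB : IsUnit B) (u : E) : Ring.inverse B (B u) = u := by
  rw [← mul_apply_eq_comp, Ring.inverse_mul_cancel B hB, one_apply_eq_self]

theorem eq_inverse_apply_iff (hB : IsUnit B) {u y : E} : u = Ring.inverse B y ↔ B u = y :=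
  ⟨fun h => h ▸ apply_inverse_apply hB y, fun h => h ▸ (inverse_apply_apply hB u).symm⟩

end Inverse

variable {𝕜 E : Type*} [Field 𝕜] [TopologicalSpace E] [AddCommGroup E] [Module 𝕜 E]
  [IsTopologicalAddGroup E] [ContinuousConstSMul 𝕜 E]
  {B : E →L[𝕜] E} (S T : E →L[𝕜] E) {t : 𝕜}

theorem mem_ker_sub_smul_comp_iff (hB : IsUnit B) {u : E} :
    u ∈ LinearMap.ker (B - t • (S ∘L T)).toLinearMap ↔
      u = t • Ring.inverse B (S (T u)) := by
  rw [← map_smul, eq_inverse_apply_iff hB]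
  simp [sub_eq_zero]

theorem mem_ker_comp_inverse_comp_sub_inv_smul_iff {φ : E} :
    φ ∈ LinearMap.ker (T ∘L Ring.inverse B ∘L S - t⁻¹ • (1 : E →L[𝕜] E)).toLinearMap ↔
      T (Ring.inverse B (S φ)) = t⁻¹ • φ := by
  simp [sub_eq_zero]

def birmanSchwingerKerEquiv (hB : IsUnit B) (ht : t ≠ 0) :
    LinearMap.ker (B - t • (S ∘L T)).toLinearMap ≃ₗ[𝕜]
      LinearMap.ker (T ∘L Ring.inverse B ∘L S - t⁻¹ • (1 : E →L[𝕜] E)).toLinearMap where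
  toFun u := ⟨T u, by
    rw [mem_ker_comp_inverse_comp_sub_inv_smul_iff]
    conv_rhs => rw [(mem_ker_sub_smul_comp_iff S T hB).1 u.2]
    rw [map_smul, inv_smul_smul₀ ht]⟩
  invFun φ := ⟨t • Ring.inverse B (S φ), by
    rw [mem_ker_sub_smul_comp_iff S T hB]
    have hφ := (mem_ker_comp_inverse_comp_sub_inv_smul_iff S T).1 φ.2
    rw [map_smul, hφ, smul_smul, mul_inv_cancel₀ ht, one_smul]⟩
  map_add' u v := Subtype.ext (map_add T (u : E) v)
  map_smul' c u := Subtype.ext (map_smul T c (u : E))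
  left_inv u := by
    ext
    exact ((mem_ker_sub_smul_comp_iff S T hB).1 u.2).symm
  right_inv φ := by
    ext
    simp only [map_smul, (mem_ker_comp_inverse_comp_sub_inv_smul_iff S T).1 φ.2, smul_smul,
      mul_inv_cancel₀ ht, one_smul]

end ContinuousLinearMap

open ContinuousLinearMap in
theorem birman_schwinger_correspondence_general (d : ℕ)
    (A : lp (fun _ : Fin d → ℤ => ℂ) 2 →L[ℂ] lp (fun _ : Fin d → ℤ => ℂ) 2)
    (V : (Fin d → ℤ) → ℝ) (hV0 : ∀ n, 0 ≤ V n)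
    (MV : lp (fun _ : Fin d → ℤ => ℂ) 2 →L[ℂ] lp (fun _ : Fin d → ℤ => ℂ) 2)
    (hMV : ∀ u n, MV u n = (V n : ℂ) * u n)
    (sqrtV : lp (fun _ : Fin d → ℤ => ℂ) 2 →L[ℂ] lp (fun _ : Fin d → ℤ => ℂ) 2)
    (hsqrtV : ∀ u n, sqrtV u n = (Real.sqrt (V n) : ℂ) * u n)
    (lam : ℝ) (hlam : (lam : ℂ) ∉ spectrum ℂ A) (t : ℝ) (ht : 0 < t) :
    Module.finrank ℂ (LinearMap.ker ((A - (t : ℂ) • MV - (lam : ℂ) • (1 : lp (fun _ : Fin d → ℤ => ℂ) 2 →L[ℂ] lp (fun _ : Fin d → ℤ => ℂ) 2)) : lp (fun _ : Fin d → ℤ => ℂ) 2 →ₗ[ℂ] lp (fun _ : Fin d → ℤ => ℂ) 2)) =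
      Module.finrank ℂ (LinearMap.ker
        ((sqrtV ∘L Ring.inverse (A - (lam : ℂ) • (1 : lp (fun _ : Fin d → ℤ => ℂ) 2 →L[ℂ] lp (fun _ : Fin d → ℤ => ℂ) 2)) ∘L sqrtV - ((t⁻¹ : ℝ) : ℂ) • (1 : lp (fun _ : Fin d → ℤ => ℂ) 2 →L[ℂ] lp (fun _ : Fin d → ℤ => ℂ) 2)) : lp (fun _ : Fin d → ℤ => ℂ) 2 →ₗ[ℂ] lp (fun _ : Fin d → ℤ => ℂ) 2)) ∧
    (LinearMap.ker ((A - (t : ℂ) • MV - (lam : ℂ) • (1 : lp (fun _ : Fin d → ℤ => ℂ) 2 →L[ℂ] lp (fun _ : Fin d → ℤ => ℂ) 2)) : lp (fun _ : Fin d → ℤ => ℂ) 2 →ₗ[ℂ] lp (fun _ : Fin d → ℤ => ℂ) 2) ≠ ⊥ ↔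
      LinearMap.ker
        ((sqrtV ∘L Ring.inverse (A - (lam : ℂ) • (1 : lp (fun _ : Fin d → ℤ => ℂ) 2 →L[ℂ] lp (fun _ : Fin d → ℤ => ℂ) 2)) ∘L sqrtV - ((t⁻¹ : ℝ) : ℂ) • (1 : lp (fun _ : Fin d → ℤ => ℂ) 2 →L[ℂ] lp (fun _ : Fin d → ℤ => ℂ) 2)) : lp (fun _ : Fin d → ℤ => ℂ) 2 →ₗ[ℂ] lp (fun _ : Fin d → ℤ => ℂ) 2) ≠ ⊥) := by
  have hB : IsUnit (A - (lam : ℂ) • 1) := by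
    rw [spectrum.notMem_iff, Algebra.algebraMap_eq_smul_one] at hlam
    simpa only [neg_sub] using hlam.neg
  have hMV_eq : MV = sqrtV ∘L sqrtV := by
    ext u n
    simp only [hMV, comp_apply, hsqrtV, ← mul_assoc, ← Complex.ofReal_mul,
      Real.mul_self_sqrt (hV0 n)]
  rw [hMV_eq, sub_right_comm, Complex.ofReal_inv]
  let e := birmanSchwingerKerEquiv sqrtV sqrtV hB (Complex.ofReal_ne_zero.2 ht.ne')
  exact ⟨e.finrank_eq, by
    rw [← Submodule.nontrivial_iff_ne_bot, ← Submodule.nontrivial_iff_ne_bot]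
    exact e.toEquiv.nontrivial_congr⟩

/-- (Birman–Schwinger principle, eigenvalue correspondence.)
Let `A` be the discrete Schrödinger operator `[Au]_n = −∑_{|m−n|=1} u_m + 2d u_n + f(n) u_n`
on `ℓ²(ℤ^d)` (with `f` bounded), and let `V : ℤ^d → [0,∞)` be bounded with `V(n) → 0` as
`|n| → ∞`, acting by multiplication (operator `MV`, with square root multiplication operator
`√V = sqrtV`).  For every `λ ∉ σ(A)` and every `t > 0`, the dimension of
`ker (A − tV − λI)` equals the dimension of `ker (X(λ) − t⁻¹ I)` where
`X(λ) = √V (A − λI)⁻¹ √V`; in particular, `λ` is an eigenvalue of `A − tV` if and only if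
`1/t` is an eigenvalue of `X(λ)`, with equal multiplicities. -/
theorem birman_schwinger_correspondence (d : ℕ) (hd : 1 ≤ d)
    (f : (Fin d → ℤ) → ℝ) (hf : ∃ C, ∀ n, |f n| ≤ C)
    (A : lp (fun _ : Fin d → ℤ => ℂ) 2 →L[ℂ] lp (fun _ : Fin d → ℤ => ℂ) 2)
    (hA : ∀ (u : lp (fun _ : Fin d → ℤ => ℂ) 2) (n : Fin d → ℤ),
      A u n = -(∑ i : Fin d, (u (n + Pi.single i 1) + u (n - Pi.single i 1)))
        + (2 * d : ℂ) * u n + (f n : ℂ) * u n)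
    (hAsa : IsSelfAdjoint A)
    (V : (Fin d → ℤ) → ℝ) (hV0 : ∀ n, 0 ≤ V n) (hVb : ∃ C, ∀ n, V n ≤ C)
    (hVdec : Tendsto V cofinite (nhds 0))
    (MV : lp (fun _ : Fin d → ℤ => ℂ) 2 →L[ℂ] lp (fun _ : Fin d → ℤ => ℂ) 2)
    (hMV : ∀ u n, MV u n = (V n : ℂ) * u n)
    (sqrtV : lp (fun _ : Fin d → ℤ => ℂ) 2 →L[ℂ] lp (fun _ : Fin d → ℤ => ℂ) 2)
    (hsqrtV : ∀ u n, sqrtV u n = (Real.sqrt (V n) : ℂ) * u n)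
    (lam : ℝ) (hlam : (lam : ℂ) ∉ spectrum ℂ A) (t : ℝ) (ht : 0 < t) :
    Module.finrank ℂ (LinearMap.ker ((A - (t : ℂ) • MV - (lam : ℂ) • (1 : lp (fun _ : Fin d → ℤ => ℂ) 2 →L[ℂ] lp (fun _ : Fin d → ℤ => ℂ) 2)) : lp (fun _ : Fin d → ℤ => ℂ) 2 →ₗ[ℂ] lp (fun _ : Fin d → ℤ => ℂ) 2)) =
      Module.finrank ℂ (LinearMap.ker
        ((sqrtV ∘L Ring.inverse (A - (lam : ℂ) • (1 : lp (fun _ : Fin d → ℤ => ℂ) 2 →L[ℂ] lp (fun _ : Fin d → ℤ => ℂ) 2)) ∘L sqrtV - ((t⁻¹ : ℝ) : ℂ) • (1 : lp (fun _ : Fin d → ℤ => ℂ) 2 →L[ℂ] lp (fun _ : Fin d → ℤ => ℂ) 2)) : lp (fun _ : Fin d → ℤ => ℂ) 2 →ₗ[ℂ] lp (fun _ : Fin d → ℤ => ℂ) 2)) ∧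
    (LinearMap.ker ((A - (t : ℂ) • MV - (lam : ℂ) • (1 : lp (fun _ : Fin d → ℤ => ℂ) 2 →L[ℂ] lp (fun _ : Fin d → ℤ => ℂ) 2)) : lp (fun _ : Fin d → ℤ => ℂ) 2 →ₗ[ℂ] lp (fun _ : Fin d → ℤ => ℂ) 2) ≠ ⊥ ↔
      LinearMap.ker
        ((sqrtV ∘L Ring.inverse (A - (lam : ℂ) • (1 : lp (fun _ : Fin d → ℤ => ℂ) 2 →L[ℂ] lp (fun _ : Fin d → ℤ => ℂ) 2)) ∘L sqrtV - ((t⁻¹ : ℝ) : ℂ) • (1 : lp (fun _ : Fin d → ℤ => ℂ) 2 →L[ℂ] lp (fun _ : Fin d → ℤ => ℂ) 2)) : lp (fun _ : Fin d → ℤ => ℂ) 2 →ₗ[ℂ] lp (fun _ : Fin d → ℤ => ℂ) 2) ≠ ⊥) :=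
  birman_schwinger_correspondence_general d A V hV0 MV hMV sqrtV hsqrtV lam hlam t ht

end
end

section
/- Let T and T' be Hermitian n×n complex matrices and λ ∈ ℝ. Then the counting functions N(T,λ) = card{i : eig_i(T) < λ} and N(T',λ) differ by at most the rank of the perturbation: |N(T,λ) − N(T',λ)| ≤ rank(T − T'). -/
/-! If `x ≠ 0` lies both in the span of the eigenvectors of `T` with eigenvalue `< λ` and in
`ker (T - T')`, then `re ⟪x, T' x⟫ = re ⟪x, T x⟫ < λ ‖x‖²`. Such a subspace meets the span of the
eigenvectors of `T'` with eigenvalue `≥ λ` only in `0`, so its dimension, which is at least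
`N(T, λ) - rank (T - T')`, is at most `N(T', λ)`. Exchanging `T` and `T'` gives the bound. -/

open Module Submodule
open scoped InnerProductSpace

namespace OrthonormalBasis

variable {𝕜 E ι : Type*} [RCLike 𝕜] [NormedAddCommGroup E] [InnerProductSpace 𝕜 E] [Fintype ι]
  (b : OrthonormalBasis ι 𝕜 E)

lemma inner_eq_zero_of_mem_span_image {s : Set ι} {x : E} (hx : x ∈ span 𝕜 (b '' s)) {i : ι}
    (hi : i ∉ s) : ⟪b i, x⟫_𝕜 = 0 := by
  rw [← b.coe_toBasis, Basis.mem_span_image] at hx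
  rw [← b.repr_apply_apply, ← b.coe_toBasis_repr_apply]
  exact Finsupp.notMem_support_iff.mp fun h => hi (hx h)

lemma finrank_span_image (s : Set ι) : finrank 𝕜 (span 𝕜 (b '' s)) = Nat.card s := by
  classical
  have hli := b.orthonormal.linearIndependent.comp ((↑) : s → ι) Subtype.val_injective
  rw [Set.image_eq_range]
  exact (finrank_span_eq_card hli).trans Nat.card_eq_fintype_card.symm

variable {T : E →ₗ[𝕜] E} {μ : ι → ℝ}

lemma inner_map_eq_mul_inner (hT : ∀ i, T (b i) = (μ i : 𝕜) • b i) (i : ι) (x : E) :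
    ⟪b i, T x⟫_𝕜 = μ i * ⟪b i, x⟫_𝕜 := by
  conv_lhs => rw [← b.sum_repr' x, map_sum]
  simp_rw [map_smul, hT, smul_smul]
  rw [b.orthonormal.inner_right_fintype, mul_comm]

lemma re_inner_map_self_eq_sum (hT : ∀ i, T (b i) = (μ i : 𝕜) • b i) (x : E) :
    RCLike.re ⟪x, T x⟫_𝕜 = ∑ i, μ i * ‖⟪b i, x⟫_𝕜‖ ^ 2 := by
  rw [← b.sum_inner_mul_inner, map_sum]
  refine Finset.sum_congr rfl fun i _ => ?_
  rw [b.inner_map_eq_mul_inner hT, ← inner_conj_symm x, mul_left_comm, RCLike.conj_mul]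
  norm_cast

variable {lam : ℝ}

lemma re_inner_map_self_lt_of_mem_span (hT : ∀ i, T (b i) = (μ i : 𝕜) • b i) {x : E}
    (hx : x ∈ span 𝕜 (b '' {i | μ i < lam})) (hx0 : x ≠ 0) :
    RCLike.re ⟪x, T x⟫_𝕜 < lam * ‖x‖ ^ 2 := by
  have hlt : ∀ i, ⟪b i, x⟫_𝕜 ≠ 0 → μ i < lam := fun i hi =>
    by_contra fun h => hi (b.inner_eq_zero_of_mem_span_image hx h)
  obtain ⟨i₀, hi₀⟩ : ∃ i, ⟪b i, x⟫_𝕜 ≠ 0 := by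
    by_contra! h
    exact hx0 (by rw [← b.sum_repr' x]; simp [h])
  rw [b.re_inner_map_self_eq_sum hT, ← b.sum_sq_norm_inner_right, Finset.mul_sum]
  refine Finset.sum_lt_sum (fun i _ => ?_) ⟨i₀, Finset.mem_univ _, ?_⟩
  · by_cases hi : ⟪b i, x⟫_𝕜 = 0
    · simp [hi]
    · exact mul_le_mul_of_nonneg_right (hlt i hi).le (by positivity)
  · exact mul_lt_mul_of_pos_right (hlt i₀ hi₀) (by positivity)

lemma le_re_inner_map_self_of_mem_span (hT : ∀ i, T (b i) = (μ i : 𝕜) • b i) {x : E}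
    (hx : x ∈ span 𝕜 (b '' {i | ¬μ i < lam})) : lam * ‖x‖ ^ 2 ≤ RCLike.re ⟪x, T x⟫_𝕜 := by
  rw [b.re_inner_map_self_eq_sum hT, ← b.sum_sq_norm_inner_right, Finset.mul_sum]
  refine Finset.sum_le_sum fun i _ => ?_
  by_cases hi : μ i < lam
  · simp [b.inner_eq_zero_of_mem_span_image hx (not_not.mpr hi)]
  · exact mul_le_mul_of_nonneg_right (not_lt.mp hi) (by positivity)

lemma finrank_le_card_of_re_inner_map_self_lt (hT : ∀ i, T (b i) = (μ i : 𝕜) • b i)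
    (V : Submodule 𝕜 E) (hV : ∀ x ∈ V, x ≠ 0 → RCLike.re ⟪x, T x⟫_𝕜 < lam * ‖x‖ ^ 2) :
    finrank 𝕜 V ≤ Nat.card {i // μ i < lam} := by
  classical
  have hdisj : Disjoint V (span 𝕜 (b '' {i | ¬μ i < lam})) := by
    refine Submodule.disjoint_def.mpr fun x hxV hxW => by_contra fun hx0 => ?_
    exact (hV x hxV hx0).not_ge (b.le_re_inner_map_self_of_mem_span hT hxW)
  have : FiniteDimensional 𝕜 E := b.toBasis.finiteDimensional_of_finite
  have hdim := Submodule.finrank_add_finrank_le_of_disjoint hdisj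
  have hcard : Nat.card {i // μ i < lam} + Nat.card {i // ¬μ i < lam} = Fintype.card ι := by
    simp only [Nat.card_eq_fintype_card]
    rw [Fintype.card_subtype_compl]
    exact Nat.add_sub_cancel' (Fintype.card_subtype_le _)
  rw [b.finrank_span_image, finrank_eq_card_basis b.toBasis] at hdim
  exact Nat.le_of_add_le_add_right (hdim.trans_eq hcard.symm : _ ≤ _)

end OrthonormalBasis

lemma Submodule.finrank_add_finrank_le_finrank_add_finrank_inf {K V : Type*} [DivisionRing K]
    [AddCommGroup V] [Module K V] [FiniteDimensional K V] (s t : Submodule K V) :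
    finrank K s + finrank K t ≤ finrank K V + finrank K (s ⊓ t : Submodule K V) := by
  rw [← Submodule.finrank_sup_add_finrank_inf_eq]
  exact Nat.add_le_add_right (Submodule.finrank_le _) _

namespace Matrix

lemma rank_neg {R m n : Type*} [CommRing R] [Fintype n] (A : Matrix m n R) :
    (-A).rank = A.rank := by
  have : (-A).mulVecLin = -A.mulVecLin := LinearMap.ext fun x => neg_mulVec x A
  rw [rank, rank, this, LinearMap.range_neg]

lemma rank_add_finrank_ker_toEuclideanLin {𝕜 n : Type*} [RCLike 𝕜] [Fintype n] [DecidableEq n]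
    (A : Matrix n n 𝕜) :
    A.rank + finrank 𝕜 (LinearMap.ker (toEuclideanLin A)) = Fintype.card n := by
  rw [toEuclideanLin_eq_toLin_orthonormal, rank_eq_finrank_range_toLin A
    (EuclideanSpace.basisFun n 𝕜).toBasis (EuclideanSpace.basisFun n 𝕜).toBasis,
    LinearMap.finrank_range_add_finrank_ker, finrank_euclideanSpace]

namespace IsHermitian

variable {𝕜 n : Type*} [RCLike 𝕜] [Fintype n] [DecidableEq n] {A B : Matrix n n 𝕜}

lemma toEuclideanLin_eigenvectorBasis (hA : A.IsHermitian) (i : n) :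
    toEuclideanLin A (hA.eigenvectorBasis i) = (hA.eigenvalues i : 𝕜) • hA.eigenvectorBasis i := by
  rw [toLpLin_apply, hA.mulVec_eigenvectorBasis, RCLike.real_smul_eq_coe_smul (K := 𝕜)]
  rfl

lemma card_eigenvalues_lt_le_add_rank (hA : A.IsHermitian) (hB : B.IsHermitian) (lam : ℝ) :
    Nat.card {i // hA.eigenvalues i < lam} ≤
      Nat.card {i // hB.eigenvalues i < lam} + (A - B).rank := by
  set EA := span 𝕜 (hA.eigenvectorBasis '' {i | hA.eigenvalues i < lam})
  set K := LinearMap.ker (toEuclideanLin (A - B))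
  have hEA : finrank 𝕜 EA = Nat.card {i // hA.eigenvalues i < lam} :=
    hA.eigenvectorBasis.finrank_span_image _
  have hK : (A - B).rank + finrank 𝕜 K = Fintype.card n :=
    (A - B).rank_add_finrank_ker_toEuclideanLin
  have hdim := Submodule.finrank_add_finrank_le_finrank_add_finrank_inf EA K
  rw [finrank_euclideanSpace] at hdim
  have hEAK : finrank 𝕜 (EA ⊓ K : Submodule 𝕜 _) ≤ Nat.card {i // hB.eigenvalues i < lam} := by
    refine hB.eigenvectorBasis.finrank_le_card_of_re_inner_map_self_lt
      hB.toEuclideanLin_eigenvectorBasis _ fun x hx hx0 => ?_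
    have hAB : toEuclideanLin B x = toEuclideanLin A x := by
      have := LinearMap.mem_ker.mp hx.2
      rw [map_sub, LinearMap.sub_apply, sub_eq_zero] at this
      exact this.symm
    rw [hAB]
    exact hA.eigenvectorBasis.re_inner_map_self_lt_of_mem_span
      hA.toEuclideanLin_eigenvectorBasis hx.1 hx0
  omega

end IsHermitian

end Matrix

/-- Let `T` and `T'` be Hermitian `n×n` complex matrices and `λ ∈ ℝ`. Then the
counting functions `N(T,λ) = card {i : eig_i(T) < λ}` and `N(T',λ)` differ by at most the rank of
the perturbation: `|N(T,λ) − N(T',λ)| ≤ rank (T − T')`. -/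
theorem counting_function_rank_perturbation {n : ℕ}
    (T T' : Matrix (Fin n) (Fin n) ℂ) (hT : T.IsHermitian) (hT' : T'.IsHermitian) (lam : ℝ) :
    ((Nat.card {i // hT.eigenvalues i < lam} : ℤ) -
        (Nat.card {i // hT'.eigenvalues i < lam} : ℤ)).natAbs ≤ (T - T').rank := by
  have h₁ := hT.card_eigenvalues_lt_le_add_rank hT' lam
  have h₂ := hT'.card_eigenvalues_lt_le_add_rank hT lam
  rw [← neg_sub, Matrix.rank_neg] at h₂
  omega
end

section
/- Let A and B be bounded self-adjoint operators on a complex Hilbert space such that σ(A) ∩ (a,b) = ∅ and B − A has finite rank r. Then the total multiplicity of the eigenvalues of B lying in (a,b) is at most r: ∑_{μ ∈ (a,b)} dim ker(B − μI) ≤ r. -/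
/-!
Put `c = (a + b) / 2` and `d = (b - a) / 2`. Since `σ(A)` avoids `(c - d, c + d)`, the continuous
functional calculus gives `(A - c)² ≥ d²`, i.e. `d ‖x‖ ≤ ‖(A - c) x‖` for every `x`. On the other hand, a nonzero sum `x` of
eigenvectors of `B` with eigenvalues in `(a, b)` is an orthogonal sum, so `‖(B - c) x‖ < d ‖x‖`.
Hence `B - A` is injective on the (direct) sum of these eigenspaces, whose dimension is therefore
at most `rank (B - A) = r`.
-/

open Module Module.End

theorem sum_finrank_le_finrank_of_injective {K V : Type*} [DivisionRing K] [AddCommGroup V]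
    [Module K V] [FiniteDimensional K V] {ι : Type*} [Fintype ι] {M : ι → Type*}
    [∀ i, AddCommGroup (M i)] [∀ i, Module K (M i)] (f : (∀ i, M i) →ₗ[K] V)
    (hf : Function.Injective f) :
    ∑ i, finrank K (M i) ≤ finrank K V := by
  classical
  have (i : ι) : FiniteDimensional K (M i) :=
    .of_injective (f ∘ₗ LinearMap.single K M i) (hf.comp (Pi.single_injective i))
  have : FiniteDimensional K (∀ i, M i) := .of_injective f hf
  rw [← finrank_pi_fintype K]
  exact LinearMap.finrank_le_finrank_of_injective hf

namespace IsSelfAdjoint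

variable {H : Type*} [NormedAddCommGroup H] [InnerProductSpace ℂ H] [CompleteSpace H]

theorem sq_mul_norm_sq_le_norm_apply_sub_smul_sq {A : H →L[ℂ] H} (hA : IsSelfAdjoint A)
    {c d : ℝ} (hgap : ∀ t ∈ spectrum ℝ A, d ^ 2 ≤ (t - c) ^ 2) (x : H) :
    d ^ 2 * ‖x‖ ^ 2 ≤ ‖A x - (c : ℂ) • x‖ ^ 2 := by
  set T := A - algebraMap ℝ (H →L[ℂ] H) c
  have hT : IsSelfAdjoint T := hA.sub (.algebraMap _ (.all c))
  have hsq : algebraMap ℝ (H →L[ℂ] H) (d ^ 2) ≤ T ^ 2 := by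
    have : cfc (fun t : ℝ => (t - c) ^ 2) A = T ^ 2 := by
      rw [cfc_pow .., cfc_sub .., cfc_id' .., cfc_const ..]
    rw [← this]
    exact algebraMap_le_cfc _ _ A hgap
  have hTx : T x = A x - (c : ℂ) • x := by
    simp [T, Algebra.algebraMap_eq_smul_one]
  have := ((ContinuousLinearMap.le_def _ _).1 hsq).re_inner_nonneg_left x
  rw [← hTx, ContinuousLinearMap.apply_norm_sq_eq_inner_adjoint_left,
    ← ContinuousLinearMap.star_eq_adjoint, hT.star_eq]
  simpa [pow_two, ContinuousLinearMap.mul_def, inner_sub_left, Algebra.algebraMap_eq_smul_one,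
    ← Complex.coe_smul, inner_smul_left, inner_self_eq_norm_mul_norm] using this

theorem norm_sq_sum_eigenvectors {B : H →L[ℂ] H} (hB : IsSelfAdjoint B) {ι : Type*} [Fintype ι]
    {l : ι → ℝ} (hl : Function.Injective l) (v : ∀ i, eigenspace (B : H →ₗ[ℂ] H) (l i)) :
    ‖∑ i, (v i : H)‖ ^ 2 = ∑ i, ‖v i‖ ^ 2 :=
  (hB.isSymmetric.orthogonalFamily_eigenspaces.comp
    (Complex.ofReal_injective.comp hl)).norm_sum v Finset.univ

theorem norm_sq_apply_sum_eigenvectors_sub_smul {B : H →L[ℂ] H} (hB : IsSelfAdjoint B)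
    {ι : Type*} [Fintype ι] {l : ι → ℝ} (hl : Function.Injective l)
    (v : ∀ i, eigenspace (B : H →ₗ[ℂ] H) (l i)) (c : ℝ) :
    ‖B (∑ i, (v i : H)) - (c : ℂ) • ∑ i, (v i : H)‖ ^ 2 = ∑ i, (l i - c) ^ 2 * ‖v i‖ ^ 2 := by
  let w i : eigenspace (B : H →ₗ[ℂ] H) (l i) := ((l i - c : ℝ) : ℂ) • v i
  have hw : B (∑ i, (v i : H)) - (c : ℂ) • ∑ i, (v i : H) = ∑ i, (w i : H) := by
    have hBv (i : ι) : B (v i) = (l i : ℂ) • (v i : H) := mem_eigenspace_iff.1 (v i).2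
    simp [w, hBv, map_sum, Finset.smul_sum, ← Finset.sum_sub_distrib, sub_smul]
  rw [hw, hB.norm_sq_sum_eigenvectors hl]
  simp only [w, norm_smul, Complex.norm_real, Real.norm_eq_abs, mul_pow, sq_abs]

theorem eigenvectors_eq_zero_of_apply_sum_eq {A B : H →L[ℂ] H} (hA : IsSelfAdjoint A)
    (hB : IsSelfAdjoint B) {c d : ℝ} (hgap : ∀ t ∈ spectrum ℝ A, d ^ 2 ≤ (t - c) ^ 2)
    {ι : Type*} [Fintype ι] {l : ι → ℝ} (hl : Function.Injective l)
    (hlc : ∀ i, (l i - c) ^ 2 < d ^ 2) (v : ∀ i, eigenspace (B : H →ₗ[ℂ] H) (l i))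
    (hv : A (∑ i, (v i : H)) = B (∑ i, v i)) :
    v = 0 := by
  by_contra hne
  obtain ⟨i, hi⟩ := Function.ne_iff.1 hne
  have key := hA.sq_mul_norm_sq_le_norm_apply_sub_smul_sq hgap (∑ i, (v i : H))
  rw [hv, hB.norm_sq_apply_sum_eigenvectors_sub_smul hl, hB.norm_sq_sum_eigenvectors hl,
    Finset.mul_sum] at key
  refine key.not_gt (Finset.sum_lt_sum (fun j _ => ?_) ⟨i, Finset.mem_univ i, ?_⟩)
  · exact mul_le_mul_of_nonneg_right (hlc j).le (sq_nonneg _)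
  · exact mul_lt_mul_of_pos_right (hlc i) (pow_pos (norm_pos_iff.2 (by simpa using hi)) 2)

end IsSelfAdjoint

/-- Let `A` and `B` be bounded self-adjoint operators on a complex Hilbert
space such that `σ(A) ∩ (a,b) = ∅` and `B − A` has finite rank `r`.  Then the total multiplicity
of the eigenvalues of `B` lying in `(a,b)` is at most `r`:
`∑_{μ ∈ (a,b)} dim ker (B − μ I) ≤ r` (stated for any finite collection of points of `(a,b)`). -/
theorem eigenvalues_in_gap_of_finite_rank_perturbation
    {H : Type*} [NormedAddCommGroup H] [InnerProductSpace ℂ H] [CompleteSpace H]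
    (A B : H →L[ℂ] H) (hA : IsSelfAdjoint A) (hB : IsSelfAdjoint B)
    (a b : ℝ) (hgap : ∀ μ : ℝ, μ ∈ Set.Ioo a b → (μ : ℂ) ∉ spectrum ℂ A)
    (r : ℕ) (hrank : Module.rank ℂ (LinearMap.range ((B - A : H →L[ℂ] H) : H →ₗ[ℂ] H)) = (r : Cardinal)) :
    ∀ s : Finset ℝ, (∀ μ ∈ s, μ ∈ Set.Ioo a b) →
      ∑ μ ∈ s, Module.finrank ℂ (LinearMap.ker ((B - (μ : ℂ) • (1 : H →L[ℂ] H) : H →L[ℂ] H) : H →ₗ[ℂ] H)) ≤ r := by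
  intro s hs
  rcases s.eq_empty_or_nonempty with rfl | ⟨μ₀, hμ₀⟩
  · simp
  have hab : a < b := (hs μ₀ hμ₀).1.trans (hs μ₀ hμ₀).2
  -- `(t - (a + b) / 2) ^ 2 - ((b - a) / 2) ^ 2 = (t - a) * (t - b)`
  have hA_gap (t : ℝ) (ht : t ∈ spectrum ℝ A) : ((b - a) / 2) ^ 2 ≤ (t - (a + b) / 2) ^ 2 := by
    have : t ∉ Set.Ioo a b := fun h => hgap t h (spectrum.algebraMap_mem ℂ ht)
    rw [Set.mem_Ioo, not_and_or, not_lt, not_lt] at this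
    rcases this with h | h <;> nlinarith
  have hs_gap (μ : s) : ((μ : ℝ) - (a + b) / 2) ^ 2 < ((b - a) / 2) ^ 2 := by
    have := hs μ μ.2
    nlinarith [this.1, this.2]
  have : FiniteDimensional ℂ (LinearMap.range ((B - A : H →L[ℂ] H) : H →ₗ[ℂ] H)) :=
    Module.finite_of_rank_eq_nat hrank
  let Ψ := LinearMap.lsum ℂ (fun μ : s => eigenspace (B : H →ₗ[ℂ] H) (μ : ℝ)) ℂ
    fun μ => Submodule.subtype _
  have hinj : Function.Injective (((B - A : H →L[ℂ] H) : H →ₗ[ℂ] H).rangeRestrict ∘ₗ Ψ) := by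
    rw [← LinearMap.ker_eq_bot, LinearMap.ker_eq_bot']
    intro v hv
    refine hA.eigenvectors_eq_zero_of_apply_sum_eq hB hA_gap Subtype.val_injective hs_gap v ?_
    exact (sub_eq_zero.1 (by simpa [Ψ] using Subtype.ext_iff.1 hv)).symm
  calc _ = ∑ μ : s, finrank ℂ (eigenspace (B : H →ₗ[ℂ] H) (μ : ℝ)) := by
        rw [← Finset.sum_coe_sort]
        exact Finset.sum_congr rfl fun μ _ => by rw [eigenspace_def]; rfl
    _ ≤ r := Module.finrank_eq_of_rank_eq hrank ▸ sum_finrank_le_finrank_of_injective _ hinj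
end
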